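/- Let G be a finite simple graph with vertex set V, let k be a positive integer, let T ⊆ V satisfy |Γ_T(Z)| ≥ k − 1 for every Steiner T-cut Z, and fix r ∈ T. Let M be the family of min-cores of the family D of demand cuts (Steiner (T,r)-cuts X with |Γ_T(X)| = k − 1). If M' ⊆ M is such that every pair of distinct min-cores in M' is independent, then ⋃_{Z ∈ M'} C(Z) is uncrossable. -/

import Mathlib

/-- `nbr G X` is Γ(X): the set of vertices outside `X` adjacent to a vertex of `X`. -/
def nbr {V : Type*} [Fintype V] [DecidableEq V] (G : SimpleGraph V) [DecidableRel G.Adj]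
    (X : Finset V) : Finset V :=
  Finset.univ.filter (fun v => v ∉ X ∧ ∃ u ∈ X, G.Adj u v)

/-- `cl G X` is X⁺ = X ∪ Γ(X). -/
def cl {V : Type*} [Fintype V] [DecidableEq V] (G : SimpleGraph V) [DecidableRel G.Adj]
    (X : Finset V) : Finset V :=
  X ∪ nbr G X

/-- A demand cut: a Steiner (T,r)-cut X with |Γ_T(X)| = k - 1. -/
def IsDemand {V : Type*} [Fintype V] [DecidableEq V] (G : SimpleGraph V) [DecidableRel G.Adj]
    (T : Finset V) (k : ℕ) (r : V) (X : Finset V) : Prop :=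
  (X ∩ T).Nonempty ∧ (T \ cl G X).Nonempty ∧ r ∉ cl G X ∧ (nbr G X ∩ T).card = k - 1

/-- A min-core: a minimal demand cut. -/
def IsMinCore {V : Type*} [Fintype V] [DecidableEq V] (G : SimpleGraph V) [DecidableRel G.Adj]
    (T : Finset V) (k : ℕ) (r : V) (X : Finset V) : Prop :=
  IsDemand G T k r X ∧ ∀ Y : Finset V, IsDemand G T k r Y → Y ⊆ X → Y = X

/-- A core: a demand cut containing exactly one min-core as a subset. -/
def IsCore {V : Type*} [Fintype V] [DecidableEq V] (G : SimpleGraph V) [DecidableRel G.Adj]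
    (T : Finset V) (k : ℕ) (r : V) (X : Finset V) : Prop :=
  IsDemand G T k r X ∧ ∃! Z : Finset V, IsMinCore G T k r Z ∧ Z ⊆ X

/-- The core family C(Z) of a min-core Z: the cores containing Z. -/
def coreFam {V : Type*} [Fintype V] [DecidableEq V] (G : SimpleGraph V) [DecidableRel G.Adj]
    (T : Finset V) (k : ℕ) (r : V) (Z : Finset V) : Set (Finset V) :=
  {X | IsCore G T k r X ∧ Z ⊆ X}

/-- A family F of subsets of V is uncrossable with respect to T. -/
def Uncrossable {V : Type*} [Fintype V] [DecidableEq V] (G : SimpleGraph V)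
    [DecidableRel G.Adj] (T : Finset V) (F : Set (Finset V)) : Prop :=
  (∀ X ∈ F, ∀ Y ∈ F, (X ∩ Y ∈ F ∧ X ∪ Y ∈ F) ∨ (X \ cl G Y ∈ F ∧ Y \ cl G X ∈ F)) ∧
  (∀ X ∈ F, ∀ Y ∈ F, (X ∩ Y ∩ T).Nonempty → X ∩ Y ∈ F ∧ X ∪ Y ∈ F)

/-- `IsMaxCore G T k r Z X` : X is the maximal element of the core family C(Z). -/
def IsMaxCore {V : Type*} [Fintype V] [DecidableEq V] (G : SimpleGraph V)
    [DecidableRel G.Adj] (T : Finset V) (k : ℕ) (r : V) (Z X : Finset V) : Prop :=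
  X ∈ coreFam G T k r Z ∧ ∀ Y ∈ coreFam G T k r Z, X ⊆ Y → Y = X

/-- Two min-cores Z, W with max-cores Z', W' are independent if
W ∩ T ⊄ Γ(Z') and Z ∩ T ⊄ Γ(W'). -/
def IndepCores {V : Type*} [Fintype V] [DecidableEq V] (G : SimpleGraph V)
    [DecidableRel G.Adj] (T : Finset V) (k : ℕ) (r : V) (Z W : Finset V) : Prop :=
  ∀ Z' W' : Finset V, IsMaxCore G T k r Z Z' → IsMaxCore G T k r W W' →
    ¬ (W ∩ T ⊆ nbr G Z') ∧ ¬ (Z ∩ T ⊆ nbr G W')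

/-! The map `X ↦ |Γ_T(X)|` is submodular, `|Γ_T(X ∩ Y)| + |Γ_T(X ∪ Y)| ≤ |Γ_T(X)| + |Γ_T(Y)|`,
and posimodular, `|Γ_T(X \ Y⁺)| + |Γ_T(Y \ X⁺)| ≤ |Γ_T(X)| + |Γ_T(Y)|`. For demand cuts `X`, `Y`,
since every Steiner `(T, r)`-cut has at least `k - 1` terminal neighbours, the sets on the left are
again demand cuts as soon as they contain terminals. In particular a min-core meeting a demand cut
in a terminal lies inside it, so two cores sharing a terminal are cores of the same min-core, and
their intersection and union are cores of it too. Cores `X ∈ C(Z)`, `Y ∈ C(W)` of distinct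
min-cores are uncrossed by differences: independence gives a terminal of `Z` outside `Γ(W')`, hence
outside `W'⁺ ⊇ Y⁺` by the previous remark, so `X \ Y⁺` (and symmetrically `Y \ X⁺`) is a demand
cut, and then a core of the same min-core. -/

open Finset

lemma card_inter_add_card_inter_le {α : Type*} [DecidableEq α] (T : Finset α)
    {P Q S R : Finset α} (hunion : P ∪ Q ⊆ S ∪ R) (hinter : P ∩ Q ⊆ S ∩ R) :
    #(P ∩ T) + #(Q ∩ T) ≤ #(S ∩ T) + #(R ∩ T) :=
  calc #(P ∩ T) + #(Q ∩ T) = #((P ∪ Q) ∩ T) + #(P ∩ Q ∩ T) := by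
        rw [union_inter_distrib_right, inter_inter_distrib_right, card_union_add_card_inter]
    _ ≤ #((S ∪ R) ∩ T) + #(S ∩ R ∩ T) := by gcongr
    _ = #(S ∩ T) + #(R ∩ T) := by
        rw [union_inter_distrib_right, inter_inter_distrib_right, card_union_add_card_inter]

section Neighbourhood

variable {V : Type*} [Fintype V] [DecidableEq V] {G : SimpleGraph V} [DecidableRel G.Adj]
  {X Y : Finset V} {v : V}

@[simp] lemma mem_nbr : v ∈ nbr G X ↔ v ∉ X ∧ ∃ u ∈ X, G.Adj u v := by
  simp [nbr]

lemma mem_cl : v ∈ cl G X ↔ v ∈ X ∨ ∃ u ∈ X, G.Adj u v := by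
  simp only [cl, mem_union, mem_nbr]
  tauto

lemma cl_mono (h : X ⊆ Y) : cl G X ⊆ cl G Y := by
  intro v
  simp only [mem_cl]
  rintro (hv | ⟨u, hu, huv⟩)
  exacts [.inl (h hv), .inr ⟨u, h hu, huv⟩]

lemma cl_union : cl G (X ∪ Y) = cl G X ∪ cl G Y := by
  ext v
  simp only [mem_union, mem_cl]
  grind

lemma nbr_inter_union_nbr_union_subset :
    nbr G (X ∩ Y) ∪ nbr G (X ∪ Y) ⊆ nbr G X ∪ nbr G Y := by
  intro v
  simp only [mem_union, mem_inter, mem_nbr]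
  grind

lemma nbr_inter_inter_nbr_union_subset :
    nbr G (X ∩ Y) ∩ nbr G (X ∪ Y) ⊆ nbr G X ∩ nbr G Y := by
  intro v
  simp only [mem_union, mem_inter, mem_nbr]
  grind

lemma nbr_sdiff_cl_union_nbr_sdiff_cl_subset :
    nbr G (X \ cl G Y) ∪ nbr G (Y \ cl G X) ⊆ nbr G X ∪ nbr G Y := by
  intro v
  simp only [mem_union, mem_sdiff, mem_cl, mem_nbr]
  grind [G.adj_comm]

lemma nbr_sdiff_cl_inter_nbr_sdiff_cl_subset :
    nbr G (X \ cl G Y) ∩ nbr G (Y \ cl G X) ⊆ nbr G X ∩ nbr G Y := by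
  intro v
  simp only [mem_inter, mem_sdiff, mem_cl, mem_nbr]
  grind [G.adj_comm]

end Neighbourhood

section Cuts

variable {V : Type*} [Fintype V] [DecidableEq V] {G : SimpleGraph V} [DecidableRel G.Adj]
  {T : Finset V} {k : ℕ} {r : V} {X Y Z W : Finset V}

def SteinerCutBound (G : SimpleGraph V) [DecidableRel G.Adj] (T : Finset V) (k : ℕ) : Prop :=
  ∀ Z : Finset V, (Z ∩ T).Nonempty → (T \ cl G Z).Nonempty → k - 1 ≤ #(nbr G Z ∩ T)

lemma card_nbr_inter_add_card_nbr_union_le (T : Finset V) :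
    #(nbr G (X ∩ Y) ∩ T) + #(nbr G (X ∪ Y) ∩ T) ≤ #(nbr G X ∩ T) + #(nbr G Y ∩ T) :=
  card_inter_add_card_inter_le T nbr_inter_union_nbr_union_subset
    nbr_inter_inter_nbr_union_subset

lemma card_nbr_sdiff_cl_add_card_nbr_sdiff_cl_le (T : Finset V) :
    #(nbr G (X \ cl G Y) ∩ T) + #(nbr G (Y \ cl G X) ∩ T) ≤ #(nbr G X ∩ T) + #(nbr G Y ∩ T) :=
  card_inter_add_card_inter_le T nbr_sdiff_cl_union_nbr_sdiff_cl_subset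
    nbr_sdiff_cl_inter_nbr_sdiff_cl_subset

lemma IsDemand.isDemand_and_isDemand_of_card_le (hT : SteinerCutBound G T k) (hr : r ∈ T)
    (hX : IsDemand G T k r X) (hY : IsDemand G T k r Y) {A B : Finset V}
    (hA : (A ∩ T).Nonempty) (hB : (B ∩ T).Nonempty) (hrA : r ∉ cl G A) (hrB : r ∉ cl G B)
    (hcard : #(nbr G A ∩ T) + #(nbr G B ∩ T) ≤ #(nbr G X ∩ T) + #(nbr G Y ∩ T)) :
    IsDemand G T k r A ∧ IsDemand G T k r B := by
  have hrA' : (T \ cl G A).Nonempty := ⟨r, mem_sdiff.2 ⟨hr, hrA⟩⟩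
  have hrB' : (T \ cl G B).Nonempty := ⟨r, mem_sdiff.2 ⟨hr, hrB⟩⟩
  have hkA := hT A hA hrA'
  have hkB := hT B hB hrB'
  have hkX := hX.2.2.2
  have hkY := hY.2.2.2
  exact ⟨⟨hA, hrA', hrA, by omega⟩, ⟨hB, hrB', hrB, by omega⟩⟩

lemma IsDemand.inter_union (hT : SteinerCutBound G T k) (hr : r ∈ T)
    (hX : IsDemand G T k r X) (hY : IsDemand G T k r Y) (hXY : (X ∩ Y ∩ T).Nonempty) :
    IsDemand G T k r (X ∩ Y) ∧ IsDemand G T k r (X ∪ Y) := by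
  refine hX.isDemand_and_isDemand_of_card_le hT hr hY hXY
    (hX.1.mono (inter_subset_inter_right subset_union_left))
    (fun h => hX.2.2.1 (cl_mono inter_subset_left h)) ?_
    (card_nbr_inter_add_card_nbr_union_le T)
  rw [cl_union, mem_union]
  exact fun h => h.elim hX.2.2.1 hY.2.2.1

lemma IsDemand.sdiff_cl (hT : SteinerCutBound G T k) (hr : r ∈ T)
    (hX : IsDemand G T k r X) (hY : IsDemand G T k r Y)
    (hXY : ((X \ cl G Y) ∩ T).Nonempty) (hYX : ((Y \ cl G X) ∩ T).Nonempty) :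
    IsDemand G T k r (X \ cl G Y) ∧ IsDemand G T k r (Y \ cl G X) :=
  hX.isDemand_and_isDemand_of_card_le hT hr hY hXY hYX
    (fun h => hX.2.2.1 (cl_mono sdiff_subset h)) (fun h => hY.2.2.1 (cl_mono sdiff_subset h))
    (card_nbr_sdiff_cl_add_card_nbr_sdiff_cl_le T)

lemma IsDemand.exists_isMinCore_subset (hX : IsDemand G T k r X) :
    ∃ Z ⊆ X, IsMinCore G T k r Z := by
  obtain ⟨Z, hZX, hZ⟩ := (Set.toFinite {Y | IsDemand G T k r Y}).exists_le_minimal hX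
  exact ⟨Z, hZX, hZ.1, fun Y hY hYZ => subset_antisymm hYZ (hZ.2 hY hYZ)⟩

lemma exists_isMaxCore_superset (hX : X ∈ coreFam G T k r Z) :
    ∃ Z', X ⊆ Z' ∧ IsMaxCore G T k r Z Z' := by
  obtain ⟨Z', hXZ', hZ'⟩ := (Set.toFinite (coreFam G T k r Z)).exists_le_maximal hX
  exact ⟨Z', hXZ', hZ'.1, fun Y hY hZ'Y => subset_antisymm (hZ'.2 hY hZ'Y) hZ'Y⟩

lemma IsMinCore.subset_of_inter_nonempty (hT : SteinerCutBound G T k) (hr : r ∈ T)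
    (hZ : IsMinCore G T k r Z) (hX : IsDemand G T k r X) (hZX : (Z ∩ X ∩ T).Nonempty) :
    Z ⊆ X :=
  inter_eq_left.1 (hZ.2 _ (hZ.1.inter_union hT hr hX hZX).1 inter_subset_left)

lemma IsCore.eq_of_isMinCore (hX : IsCore G T k r X) (hZ : IsMinCore G T k r Z) (hZX : Z ⊆ X)
    (hW : IsMinCore G T k r W) (hWX : W ⊆ X) : Z = W :=
  hX.2.unique ⟨hZ, hZX⟩ ⟨hW, hWX⟩

lemma mem_coreFam_of_subset (hZ : IsMinCore G T k r Z) (hX : X ∈ coreFam G T k r Z)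
    (hY : IsDemand G T k r Y) (hYX : Y ⊆ X) : Y ∈ coreFam G T k r Z := by
  obtain ⟨Z₀, hZ₀Y, hZ₀⟩ := hY.exists_isMinCore_subset
  obtain rfl : Z₀ = Z := hX.1.eq_of_isMinCore hZ₀ (hZ₀Y.trans hYX) hZ hX.2
  exact ⟨⟨hY, Z₀, ⟨hZ, hZ₀Y⟩, fun W hW => hX.1.eq_of_isMinCore hW.1 (hW.2.trans hYX) hZ hX.2⟩,
    hZ₀Y⟩

lemma union_mem_coreFam (hT : SteinerCutBound G T k) (hr : r ∈ T) (hZ : IsMinCore G T k r Z)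
    (hX : X ∈ coreFam G T k r Z) (hY : Y ∈ coreFam G T k r Z) (hXY : IsDemand G T k r (X ∪ Y)) :
    X ∪ Y ∈ coreFam G T k r Z := by
  have hZXY : Z ⊆ X ∪ Y := hX.2.trans subset_union_left
  refine ⟨⟨hXY, Z, ⟨hZ, hZXY⟩, fun W ⟨hW, hWXY⟩ => ?_⟩, hZXY⟩
  -- a min-core inside `X ∪ Y` has a terminal in `X` or in `Y`, hence lies inside `X` or `Y`
  obtain ⟨t, htWT⟩ := hW.1.1
  obtain ⟨htW, htT⟩ := mem_inter.1 htWT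
  rcases mem_union.1 (hWXY htW) with htX | htY
  · exact hX.1.eq_of_isMinCore hW
      (hW.subset_of_inter_nonempty hT hr hX.1.1 ⟨t, mem_inter.2 ⟨mem_inter.2 ⟨htW, htX⟩, htT⟩⟩)
      hZ hX.2
  · exact hY.1.eq_of_isMinCore hW
      (hW.subset_of_inter_nonempty hT hr hY.1.1 ⟨t, mem_inter.2 ⟨mem_inter.2 ⟨htW, htY⟩, htT⟩⟩)
      hZ hY.2

lemma eq_of_mem_coreFam_of_inter_nonempty (hT : SteinerCutBound G T k) (hr : r ∈ T)
    (hZ : IsMinCore G T k r Z) (hW : IsMinCore G T k r W) (hX : X ∈ coreFam G T k r Z)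
    (hY : Y ∈ coreFam G T k r W) (hXY : (X ∩ Y ∩ T).Nonempty) : Z = W := by
  obtain ⟨Z₀, hZ₀XY, hZ₀⟩ := (hX.1.1.inter_union hT hr hY.1.1 hXY).1.exists_isMinCore_subset
  exact (hX.1.eq_of_isMinCore hZ hX.2 hZ₀ (hZ₀XY.trans inter_subset_left)).trans
    (hY.1.eq_of_isMinCore hZ₀ (hZ₀XY.trans inter_subset_right) hW hY.2)

/-- A terminal of `Z` outside `Γ(W')` is also outside `W'` (else `Z ⊆ W'`), hence outside
`Y⁺ ⊆ W'⁺`. -/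
lemma sdiff_cl_inter_nonempty (hT : SteinerCutBound G T k) (hr : r ∈ T)
    (hZ : IsMinCore G T k r Z) (hW : IsMinCore G T k r W) (hZW : Z ≠ W)
    (hX : X ∈ coreFam G T k r Z) {W' : Finset V} (hW' : W' ∈ coreFam G T k r W) (hYW' : Y ⊆ W')
    (hindep : ¬ Z ∩ T ⊆ nbr G W') : ((X \ cl G Y) ∩ T).Nonempty := by
  obtain ⟨v, hvZT, hvW'nbr⟩ := not_subset.1 hindep
  obtain ⟨hvZ, hvT⟩ := mem_inter.1 hvZT
  have hvW' : v ∉ W' := fun hvW' => hZW <| hW'.1.eq_of_isMinCore hZ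
    (hZ.subset_of_inter_nonempty hT hr hW'.1.1 ⟨v, mem_inter.2 ⟨mem_inter.2 ⟨hvZ, hvW'⟩, hvT⟩⟩)
    hW hW'.2
  have hvY : v ∉ cl G Y := fun hvY => by
    rcases mem_union.1 (cl_mono hYW' hvY) with h | h
    exacts [hvW' h, hvW'nbr h]
  exact ⟨v, mem_inter.2 ⟨mem_sdiff.2 ⟨hX.2 hvZ, hvY⟩, hvT⟩⟩

lemma inter_mem_coreFam_and_union_mem_coreFam (hT : SteinerCutBound G T k) (hr : r ∈ T)
    (hZ : IsMinCore G T k r Z) (hW : IsMinCore G T k r W) (hX : X ∈ coreFam G T k r Z)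
    (hY : Y ∈ coreFam G T k r W) (hXY : (X ∩ Y ∩ T).Nonempty) :
    X ∩ Y ∈ coreFam G T k r Z ∧ X ∪ Y ∈ coreFam G T k r Z := by
  obtain rfl := eq_of_mem_coreFam_of_inter_nonempty hT hr hZ hW hX hY hXY
  obtain ⟨hI, hU⟩ := hX.1.1.inter_union hT hr hY.1.1 hXY
  exact ⟨mem_coreFam_of_subset hZ hX hI inter_subset_left, union_mem_coreFam hT hr hZ hX hY hU⟩

lemma sdiff_cl_mem_coreFam (hT : SteinerCutBound G T k) (hr : r ∈ T)
    (hZ : IsMinCore G T k r Z) (hW : IsMinCore G T k r W) (hZW : Z ≠ W)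
    (hindep : IndepCores G T k r Z W) (hX : X ∈ coreFam G T k r Z) (hY : Y ∈ coreFam G T k r W) :
    X \ cl G Y ∈ coreFam G T k r Z ∧ Y \ cl G X ∈ coreFam G T k r W := by
  obtain ⟨Z', hXZ', hZ'⟩ := exists_isMaxCore_superset hX
  obtain ⟨W', hYW', hW'⟩ := exists_isMaxCore_superset hY
  obtain ⟨hWZ', hZW'⟩ := hindep Z' W' hZ' hW'
  obtain ⟨hXY, hYX⟩ := hX.1.1.sdiff_cl hT hr hY.1.1
    (sdiff_cl_inter_nonempty hT hr hZ hW hZW hX hW'.1 hYW' hZW')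
    (sdiff_cl_inter_nonempty hT hr hW hZ hZW.symm hY hZ'.1 hXZ' hWZ')
  exact ⟨mem_coreFam_of_subset hZ hX hXY sdiff_subset, mem_coreFam_of_subset hW hY hYX sdiff_subset⟩

end Cuts

theorem stmt_12_general {V : Type*} [Fintype V] [DecidableEq V]
    (G : SimpleGraph V) [DecidableRel G.Adj] (k : ℕ)
    (T : Finset V)
    -- |Γ_T(Z)| ≥ k-1 for every Steiner T-cut Z
    (hTconn : ∀ Z : Finset V, (Z ∩ T).Nonempty → (T \ cl G Z).Nonempty →
      k - 1 ≤ (nbr G Z ∩ T).card)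
    (r : V) (hr : r ∈ T)
    (M' : Set (Finset V)) (hM' : ∀ Z ∈ M', IsMinCore G T k r Z)
    (hind : ∀ Z ∈ M', ∀ W ∈ M', Z ≠ W → IndepCores G T k r Z W) :
    Uncrossable G T (⋃ Z ∈ M', coreFam G T k r Z) := by
  have hT : SteinerCutBound G T k := hTconn
  set F := ⋃ Z ∈ M', coreFam G T k r Z
  have mem_F {X : Finset V} : X ∈ F ↔ ∃ Z ∈ M', X ∈ coreFam G T k r Z := by
    simp only [F, Set.mem_iUnion, exists_prop]
  have meet : ∀ X ∈ F, ∀ Y ∈ F, (X ∩ Y ∩ T).Nonempty → X ∩ Y ∈ F ∧ X ∪ Y ∈ F := by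
    intro X hX Y hY hXY
    obtain ⟨Z, hZM, hXZ⟩ := mem_F.1 hX
    obtain ⟨W, hWM, hYW⟩ := mem_F.1 hY
    obtain ⟨hI, hU⟩ :=
      inter_mem_coreFam_and_union_mem_coreFam hT hr (hM' Z hZM) (hM' W hWM) hXZ hYW hXY
    exact ⟨mem_F.2 ⟨Z, hZM, hI⟩, mem_F.2 ⟨Z, hZM, hU⟩⟩
  refine ⟨fun X hX Y hY => ?_, meet⟩
  by_cases hXY : (X ∩ Y ∩ T).Nonempty
  · exact .inl (meet X hX Y hY hXY)
  obtain ⟨Z, hZM, hXZ⟩ := mem_F.1 hX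
  obtain ⟨W, hWM, hYW⟩ := mem_F.1 hY
  have hZW : Z ≠ W := by
    rintro rfl
    exact hXY ((hM' Z hZM).1.1.mono (inter_subset_inter_right (subset_inter hXZ.2 hYW.2)))
  obtain ⟨hXY', hYX'⟩ :=
    sdiff_cl_mem_coreFam hT hr (hM' Z hZM) (hM' W hWM) hZW (hind Z hZM W hWM hZW) hXZ hYW
  exact .inr ⟨mem_F.2 ⟨Z, hZM, hXY'⟩, mem_F.2 ⟨W, hWM, hYX'⟩⟩

theorem stmt_12 {V : Type*} [Fintype V] [DecidableEq V]
    (G : SimpleGraph V) [DecidableRel G.Adj] (k : ℕ) (hk : 1 ≤ k)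
    (T : Finset V)
    -- |Γ_T(Z)| ≥ k-1 for every Steiner T-cut Z
    (hTconn : ∀ Z : Finset V, (Z ∩ T).Nonempty → (T \ cl G Z).Nonempty →
      k - 1 ≤ (nbr G Z ∩ T).card)
    (r : V) (hr : r ∈ T)
    (M' : Set (Finset V)) (hM' : ∀ Z ∈ M', IsMinCore G T k r Z)
    (hind : ∀ Z ∈ M', ∀ W ∈ M', Z ≠ W → IndepCores G T k r Z W) :
    Uncrossable G T (⋃ Z ∈ M', coreFam G T k r Z) :=
  stmt_12_general G k T hTconn r hr M' hM' hind
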